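/- arXiv:2003.10219 — 2 statements merged into one kernel-verified Lean document; each statement's English description precedes it below -/
import Mathlib

section
/- Let 0 < ε ≤ 1/N, σ > 0, N ≥ 4 a positive even integer, and x_i = -σε ln(1 - 2(1-ε)i/N) for i ≤ N/2. Then the step size h_{N/2-1} = x_{N/2} - x_{N/2-1} satisfies (1/2)σε ≤ h_{N/2-1} ≤ 2σ/N. -/
/-- On the Bakhvalov-type mesh `x i = -σ ε ln(1 - 2(1-ε)i/N)` with `N ≥ 4` even and
`ε ≤ 1/N`, the step size `h (N/2-1) = x (N/2) - x (N/2-1)` satisfies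
`(1/2) σ ε ≤ h (N/2-1) ≤ 2σ/N`. -/
theorem stmt_2 (ε σ : ℝ) (N : ℕ) (hε : 0 < ε) (hεN : ε ≤ 1 / N) (hσ : 0 < σ)
    (hN : 4 ≤ N) (hNe : Even N)
    (x : ℕ → ℝ)
    (hx : ∀ i ≤ N / 2, x i = -σ * ε * Real.log (1 - 2 * (1 - ε) * i / N)) :
    (1/2) * σ * ε ≤ x (N / 2) - x (N / 2 - 1) ∧
      x (N / 2) - x (N / 2 - 1) ≤ 2 * σ / N := by
  obtain ⟨m, hm⟩ := hNe
  have hm2 : N / 2 = m := by omega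
  have hm4 : 2 ≤ m := by omega
  have hMr : (2:ℝ) ≤ (m:ℝ) := by exact_mod_cast hm4
  have hMpos : (0:ℝ) < (m:ℝ) := by linarith
  have hNr : (N:ℝ) = 2 * (m:ℝ) := by
    have : N = 2 * m := by omega
    exact_mod_cast this
  have hcast : ((m - 1 : ℕ) : ℝ) = (m:ℝ) - 1 := by
    have h1 : (1:ℕ) ≤ m := by omega
    push_cast [Nat.cast_sub h1]
    ring
  have hx1 := hx m (by omega)
  have hx2 := hx (m - 1) (by omega)
  rw [hm2]
  set a : ℝ := (1 + ε * ((m:ℝ) - 1)) / (m:ℝ) with ha_def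
  have hεnn : 0 ≤ ε * ((m:ℝ) - 1) :=
    mul_nonneg hε.le (by linarith)
  have ha_pos : 0 < a := by
    apply div_pos
    · linarith
    · exact hMpos
  have harg1 : 1 - 2 * (1 - ε) * (m:ℝ) / (N:ℝ) = ε := by
    rw [hNr]; field_simp; ring
  have harg2 : 1 - 2 * (1 - ε) * ((m - 1 : ℕ):ℝ) / (N:ℝ) = a := by
    rw [hNr, hcast, ha_def]; field_simp; ring
  have hεle : ε ≤ 1 / (2 * (m:ℝ)) := by rwa [hNr] at hεN
  have hεm : 2 * (m:ℝ) * ε ≤ 1 := by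
    rw [le_div_iff₀ (by positivity)] at hεle
    linarith
  have hdiff : x m - x (m - 1) = σ * ε * Real.log (a / ε) := by
    rw [hx1, hx2, harg1, harg2, Real.log_div (ne_of_gt ha_pos) (ne_of_gt hε)]
    ring
  have h2ε : 2 * ε ≤ a := by
    rw [ha_def, le_div_iff₀ hMpos]
    nlinarith
  have haε2 : (2:ℝ) ≤ a / ε := by
    rw [le_div_iff₀ hε]; linarith
  have hlog2 : (1:ℝ)/2 ≤ Real.log 2 := by
    have := Real.log_two_gt_d9
    linarith
  constructor
  · -- lower bound
    rw [hdiff]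
    have hl : Real.log 2 ≤ Real.log (a / ε) :=
      Real.log_le_log (by norm_num) haε2
    have h12 : (1:ℝ)/2 ≤ Real.log (a / ε) := by linarith
    have := mul_le_mul_of_nonneg_left h12 (mul_pos hσ hε).le
    calc (1/2) * σ * ε = σ * ε * (1/2) := by ring
      _ ≤ σ * ε * Real.log (a / ε) := by linarith
  · -- upper bound
    rw [hdiff, hNr]
    have hεm1 : ε * ((m:ℝ) - 1) ≤ 1 := by nlinarith
    have ha_le : a ≤ 2 / (m:ℝ) := by
      rw [ha_def, div_le_div_iff₀ hMpos hMpos]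
      nlinarith
    have hme : 0 < (m:ℝ) * ε := by positivity
    have hstep : a / ε ≤ 2 / ((m:ℝ) * ε) := by
      rw [div_le_div_iff₀ hε hme]
      have h := mul_le_mul_of_nonneg_right ha_le hme.le
      have heq : 2 / (m:ℝ) * ((m:ℝ) * ε) = 2 * ε := by
        field_simp
      linarith [h, heq ▸ h]
    have hlog_le : Real.log (a / ε) ≤ Real.log (2 / ((m:ℝ) * ε)) :=
      Real.log_le_log (by positivity) hstep
    have hsplit : Real.log (2 / ((m:ℝ) * ε)) = Real.log 2 + Real.log (1 / ((m:ℝ) * ε)) := by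
      rw [← Real.log_mul (by norm_num) (by positivity)]
      ring_nf
    have hsub : Real.log (1 / ((m:ℝ) * ε)) ≤ 1 / ((m:ℝ) * ε) - 1 :=
      Real.log_le_sub_one_of_pos (by positivity)
    have hlog2' : Real.log 2 ≤ 1 := by
      have := Real.log_two_lt_d9; linarith
    have hεinv : ε * (Real.log 2 + (1 / ((m:ℝ) * ε) - 1)) = ε * Real.log 2 + 1 / (m:ℝ) - ε := by
      field_simp; ring
    have hkey : ε * Real.log (a / ε) ≤ 1 / (m:ℝ) := by
      have h1 : Real.log (a / ε) ≤ Real.log 2 + (1 / ((m:ℝ) * ε) - 1) := by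
        rw [hsplit] at hlog_le; linarith
      have h2 := mul_le_mul_of_nonneg_left h1 hε.le
      have h3 := mul_le_mul_of_nonneg_left hlog2' hε.le
      rw [hεinv] at h2
      linarith
    have h4 := mul_le_mul_of_nonneg_left hkey hσ.le
    have h5 : σ * (1 / (m:ℝ)) = 2 * σ / (2 * (m:ℝ)) := by
      field_simp
    calc σ * ε * Real.log (a / ε) = σ * (ε * Real.log (a / ε)) := by ring
      _ ≤ σ * (1 / (m:ℝ)) := h4
      _ = 2 * σ / (2 * (m:ℝ)) := h5
end

section
/- Let 0 < ε ≤ 1/2, N a positive even integer with N ≥ 4, σ > 0, and x_i = -σε ln(1 - 2(1-ε)i/N). Then for every i with 0 ≤ i ≤ N/2-2 and every real μ with 0 ≤ μ ≤ σ, one has h_i^μ · e^{-x_i/ε} ≤ C ε^μ N^{-μ}, where C = (2σ)^μ · 2^μ and h_i = x_{i+1} - x_i. -/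
/-!
Write `a = 1 - 2(1-ε)i/N` and `b = 1 - 2(1-ε)(i+1)/N`, so that `e^{-x_i/ε} = a^σ` and
`h_i = σε (ln a - ln b) ≤ σε (a - b)/b` with `a - b = 2(1-ε)/N`. For `i ≤ N/2 - 2` the last
argument `b` still dominates the step `a - b`, so `a ≤ 2b`; hence `a^σ ≤ a^μ ≤ (2b)^μ`, and the
factor `b` cancels: `h_i^μ e^{-x_i/ε} ≤ (2σε(a - b))^μ ≤ (4σε/N)^μ`.
-/

open Real

lemma log_sub_log_le_sub_div {a b : ℝ} (ha : 0 < a) (hb : 0 < b) :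
    log a - log b ≤ (a - b) / b := by
  rw [← log_div ha.ne' hb.ne', sub_div, div_self hb.ne']
  exact log_le_sub_one_of_pos (div_pos ha hb)

lemma mul_log_sub_log_rpow_mul_rpow_le {c a b μ σ : ℝ} (hc : 0 ≤ c) (hb : 0 < b) (hba : b ≤ a)
    (ha1 : a ≤ 1) (ha2b : a ≤ 2 * b) (hμ : 0 ≤ μ) (hμσ : μ ≤ σ) :
    (c * (log a - log b)) ^ μ * a ^ σ ≤ (2 * c * (a - b)) ^ μ := by
  have ha : 0 < a := hb.trans_le hba
  have hlog : 0 ≤ log a - log b := sub_nonneg.2 (log_le_log hb hba)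
  have hstep : c * (log a - log b) ≤ c * (a - b) / b := by
    rw [mul_div_assoc]
    exact mul_le_mul_of_nonneg_left (log_sub_log_le_sub_div ha hb) hc
  have hweight : a ^ σ ≤ (2 * b) ^ μ :=
    (rpow_le_rpow_of_exponent_ge ha ha1 hμσ).trans (rpow_le_rpow ha.le ha2b hμ)
  calc (c * (log a - log b)) ^ μ * a ^ σ ≤ (c * (a - b) / b) ^ μ * (2 * b) ^ μ := by
        gcongr
    _ = (2 * c * (a - b)) ^ μ := by
        rw [← mul_rpow (div_nonneg (mul_nonneg hc (sub_nonneg.2 hba)) hb.le) (by positivity)]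
        congr 1
        field_simp

/-- The argument of the logarithm in the Bakhvalov mesh `x_i = -σε ln (bakhvalovArg ε N i)`. -/
noncomputable def bakhvalovArg (ε N t : ℝ) : ℝ := 1 - 2 * (1 - ε) * t / N

section bakhvalovArg

variable {ε N t : ℝ}

lemma bakhvalovArg_sub_bakhvalovArg_add_one (hN : N ≠ 0) :
    bakhvalovArg ε N t - bakhvalovArg ε N (t + 1) = 2 * (1 - ε) / N := by
  unfold bakhvalovArg
  field_simp
  ring

lemma bakhvalovArg_sub_bakhvalovArg_add_one_le_two_div (hε : 0 ≤ ε) (hN : 0 < N) :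
    bakhvalovArg ε N t - bakhvalovArg ε N (t + 1) ≤ 2 / N := by
  rw [bakhvalovArg_sub_bakhvalovArg_add_one hN.ne']
  gcongr
  linarith

lemma bakhvalovArg_add_one_le (hε : ε ≤ 1) (hN : 0 ≤ N) :
    bakhvalovArg ε N (t + 1) ≤ bakhvalovArg ε N t := by
  unfold bakhvalovArg
  have : 0 ≤ 1 - ε := by linarith
  gcongr
  linarith

lemma bakhvalovArg_le_one (hε : ε ≤ 1) (ht : 0 ≤ t) (hN : 0 ≤ N) : bakhvalovArg ε N t ≤ 1 := by
  unfold bakhvalovArg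
  have : 0 ≤ 2 * (1 - ε) * t / N := by
    have : 0 ≤ 1 - ε := by linarith
    positivity
  linarith

lemma bakhvalovArg_sub_bakhvalovArg_add_one_le (hε : 0 ≤ ε) (ht : 0 ≤ t)
    (htN : 2 * (t + 2) ≤ N) :
    bakhvalovArg ε N t - bakhvalovArg ε N (t + 1) ≤ bakhvalovArg ε N (t + 1) := by
  have hN : 0 < N := by linarith
  rw [bakhvalovArg_sub_bakhvalovArg_add_one hN.ne', bakhvalovArg, le_sub_iff_add_le,
    ← add_div, div_le_one hN]
  nlinarith

lemma bakhvalovArg_add_one_pos (hε : 0 ≤ ε) (hε1 : ε < 1) (ht : 0 ≤ t)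
    (htN : 2 * (t + 2) ≤ N) : 0 < bakhvalovArg ε N (t + 1) := by
  have hN : 0 < N := by linarith
  have hstep : 0 < 2 * (1 - ε) / N := div_pos (by linarith) hN
  have := bakhvalovArg_sub_bakhvalovArg_add_one_le hε ht htN
  rw [bakhvalovArg_sub_bakhvalovArg_add_one hN.ne'] at this
  linarith

end bakhvalovArg

lemma exp_neg_div_of_eq_neg_mul_log {x σ ε a : ℝ} (hε : ε ≠ 0) (ha : 0 < a)
    (hx : x = -σ * ε * log a) : exp (-x / ε) = a ^ σ := by
  rw [rpow_def_of_pos ha, hx]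
  congr 1
  field_simp

theorem stmt_4_general (ε σ : ℝ) (N : ℕ) (hε : 0 < ε) (hε2 : ε ≤ 1/2)
    (hN : 4 ≤ N)
    (x : ℕ → ℝ)
    (hx : ∀ i ≤ N / 2, x i = -σ * ε * Real.log (1 - 2 * (1 - ε) * i / N)) :
    ∀ i : ℕ, i ≤ N / 2 - 2 → ∀ μ : ℝ, 0 ≤ μ → μ ≤ σ →
      (x (i + 1) - x i) ^ μ * Real.exp (-x i / ε) ≤
        (2 * σ) ^ μ * 2 ^ μ * ε ^ μ * (N : ℝ) ^ (-μ) := by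
  intro i hi μ hμ0 hμσ
  have hiN : 2 * ((i : ℝ) + 2) ≤ N := by exact_mod_cast (by omega : 2 * (i + 2) ≤ N)
  have hN0 : (0 : ℝ) < N := by positivity
  have hσ : 0 ≤ σ := hμ0.trans hμσ
  have hb := bakhvalovArg_add_one_pos hε.le (by linarith) i.cast_nonneg hiN
  have hab := bakhvalovArg_sub_bakhvalovArg_add_one_le hε.le i.cast_nonneg hiN
  have hba := bakhvalovArg_add_one_le (t := i) (by linarith : ε ≤ 1) hN0.le
  have hxi : x i = -σ * ε * log (bakhvalovArg ε N i) := hx i (by omega)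
  have hxi1 : x (i + 1) = -σ * ε * log (bakhvalovArg ε N (i + 1)) := by
    rw [hx (i + 1) (by omega)]
    push_cast
    rfl
  rw [exp_neg_div_of_eq_neg_mul_log hε.ne' (by linarith) hxi,
    show x (i + 1) - x i = σ * ε * (log (bakhvalovArg ε N i) - log (bakhvalovArg ε N (i + 1))) by
      rw [hxi, hxi1]; ring]
  calc _ ≤ (2 * (σ * ε) * (bakhvalovArg ε N i - bakhvalovArg ε N (i + 1))) ^ μ :=
        mul_log_sub_log_rpow_mul_rpow_le (by positivity) hb hba
          (bakhvalovArg_le_one (by linarith) i.cast_nonneg hN0.le) (by linarith) hμ0 hμσ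
    _ ≤ (2 * σ * 2 * ε * (N : ℝ)⁻¹) ^ μ := by
        rw [show 2 * σ * 2 * ε * (N : ℝ)⁻¹ = 2 * (σ * ε) * (2 / N) by ring]
        gcongr
        exact bakhvalovArg_sub_bakhvalovArg_add_one_le_two_div hε.le hN0
    _ = (2 * σ) ^ μ * 2 ^ μ * ε ^ μ * (N : ℝ) ^ (-μ) := by
        rw [mul_rpow (by positivity) (by positivity), mul_rpow (by positivity) (by positivity),
          mul_rpow (by positivity) (by positivity), rpow_neg hN0.le, inv_rpow hN0.le]

/-- On the Bakhvalov-type mesh `x i = -σ ε ln(1 - 2(1-ε)i/N)` with `N ≥ 4` even: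
for every `0 ≤ i ≤ N/2 - 2` and every real `0 ≤ μ ≤ σ` one has
`h i ^ μ * exp (-x i / ε) ≤ (2σ)^μ * 2^μ * ε^μ * N^(-μ)`. -/
theorem stmt_4 (ε σ : ℝ) (N : ℕ) (hε : 0 < ε) (hε2 : ε ≤ 1/2) (hσ : 0 < σ)
    (hN : 4 ≤ N) (hNe : Even N)
    (x : ℕ → ℝ)
    (hx : ∀ i ≤ N / 2, x i = -σ * ε * Real.log (1 - 2 * (1 - ε) * i / N)) :
    ∀ i : ℕ, i ≤ N / 2 - 2 → ∀ μ : ℝ, 0 ≤ μ → μ ≤ σ →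
      (x (i + 1) - x i) ^ μ * Real.exp (-x i / ε) ≤
        (2 * σ) ^ μ * 2 ^ μ * ε ^ μ * (N : ℝ) ^ (-μ) :=
  stmt_4_general ε σ N hε hε2 hN x hx
end
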